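/- arXiv:1001.0464 — 11 statements merged into one kernel-verified Lean document; each statement's English description precedes it below -/
import Mathlib

section
/- Let M be a nonsingular 3×3 complex matrix and s a nonzero vector in ℂ³ such that for every positive integer k, s is not an eigenvector of M^k (i.e., M^k s is not a complex scalar multiple of s). Let F₁, F₂, F₃ be 2×3 complex matrices, each of rank 2, such that the intersection of the row spaces of F₁, F₂, F₃ is the zero subspace. Then for every positive integer n there exists an index i ∈ {1,2,3} and a subset S ⊆ {Fᵢ M^k s : 0 ≤ k ≤ n³} with |S| ≥ n whose vectors are pairwise linearly independent over ℂ. -/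
open Matrix

/-- The row space of a 2×3 complex matrix: the ℂ-linear span of its rows in ℂ³. -/
noncomputable def rowSpace (F : Matrix (Fin 2) (Fin 3) ℂ) : Submodule ℂ (Fin 3 → ℂ) :=
  Submodule.span ℂ (Set.range fun i : Fin 2 => F i)

/-!
If the claim failed for some `n`, then for each `i` the vectors `Fᵢ Mᵏ s` with `k ≤ n³` would lie
on at most `n` lines of `ℂ²` (the zero line included), so by pigeonhole two exponents `j < k`
give the same line under all three `Fᵢ`. The kernels of the `Fᵢ` are lines (rank condition) that
span `ℂ³` (dual to the row spaces meeting trivially). Each kernel line meets the span of `Mʲ s`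
and `Mᵏ s`, hence lies in it, so this span is everything unless the two vectors are dependent;
cancelling the invertible `Mʲ` then makes `s` an eigenvector of `M^(k-j)`.
-/

open Module Submodule Finset

variable {K : Type*} [Field K]

theorem Matrix.map_dotProductEquiv_span_row {m n : Type*} [Fintype m] [DecidableEq m]
    [Fintype n] [DecidableEq n] (A : Matrix m n K) :
    (span K (Set.range A.row)).map (dotProductEquiv K n : (n → K) →ₗ[K] Dual K (n → K)) =
      (LinearMap.ker A.mulVecLin).dualAnnihilator := by
  have hcomm : (dotProductEquiv K n).toLinearMap ∘ₗ A.vecMulLinear =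
      A.mulVecLin.dualMap ∘ₗ (dotProductEquiv K m).toLinearMap := by
    ext x w
    simp
  rw [← range_vecMulLinear, ← LinearMap.range_dualMap_eq_dualAnnihilator_ker,
    ← LinearMap.range_comp, hcomm, LinearMap.range_comp, LinearEquiv.range, Submodule.map_top]

theorem Matrix.iSup_ker_mulVecLin_eq_top {ι m n : Type*} [Fintype m] [DecidableEq m]
    [Fintype n] [DecidableEq n] (A : ι → Matrix m n K) (h : ⨅ i, span K (Set.range (A i).row) = ⊥) :
    ⨆ i, LinearMap.ker (A i).mulVecLin = ⊤ := by
  rw [← dualAnnihilator_eq_bot_iff, dualAnnihilator_iSup_eq]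
  simp_rw [← map_dotProductEquiv_span_row, map_equiv_eq_comap_symm, ← comap_iInf, h]
  exact LinearEquiv.ker _

section Pair

variable {V W : Type*} [AddCommGroup V] [Module K V] [AddCommGroup W] [Module K W]

theorem not_linearIndependent_pair_of_iSup_ker_eq_top [FiniteDimensional K V] {ι : Type*}
    (f : ι → V →ₗ[K] W) (hker : ∀ i, finrank K (LinearMap.ker (f i)) ≤ 1)
    (hspan : ⨆ i, LinearMap.ker (f i) = ⊤) (hV : 2 < finrank K V) {x y : V}
    (h : ∀ i, ¬ LinearIndependent K ![f i x, f i y]) : ¬ LinearIndependent K ![x, y] := by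
  intro hxy
  set P := span K (Set.range ![x, y])
  have hle : ∀ i, LinearMap.ker (f i) ≤ P := by
    intro i
    have hmeet : P ⊓ LinearMap.ker (f i) ≠ ⊥ := fun hbot => by
      have hfxy : f i ∘ ![x, y] = ![f i x, f i y] := by ext j; fin_cases j <;> rfl
      exact h i (hfxy ▸ hxy.map (disjoint_iff.2 hbot))
    have heq := eq_of_le_of_finrank_le (inf_le_right : P ⊓ LinearMap.ker (f i) ≤ _)
      ((hker i).trans (Nat.one_le_iff_ne_zero.2 fun h0 => hmeet (finrank_eq_zero.1 h0)))
    exact heq ▸ inf_le_left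
  have : finrank K V ≤ 2 := calc
    finrank K V = finrank K (⊤ : Submodule K V) := (finrank_top K V).symm
    _ ≤ finrank K P := finrank_mono (hspan ▸ iSup_le hle)
    _ = 2 := by rw [finrank_span_eq_card hxy]; simp
  omega

theorem linearIndependent_pair_of_span_singleton_ne {u v : W} (hu : u ≠ 0) (hv : v ≠ 0)
    (h : K ∙ u ≠ K ∙ v) : LinearIndependent K ![u, v] := by
  rw [LinearIndependent.pair_iff' hu]
  rintro a rfl
  exact h (span_singleton_smul_eq (IsUnit.mk0 a (left_ne_zero_of_smul hv)) u).symm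

theorem not_linearIndependent_pair_of_span_singleton_eq {u v : W} (h : K ∙ u = K ∙ v) :
    ¬ LinearIndependent K ![u, v] := by
  obtain ⟨a, rfl⟩ := mem_span_singleton.1 (h ▸ mem_span_singleton_self u)
  rw [LinearIndependent.pair_iff]
  push Not
  exact ⟨1, -a, by simp, by simp⟩

theorem exists_pairwise_linearIndependent_of_lt_card_image_span [DecidableEq W]
    [DecidableEq (Submodule K W)] (t : Finset W) {n : ℕ} (h : n < (t.image (K ∙ ·)).card) :
    ∃ S ⊆ t, n ≤ S.card ∧ ∀ u ∈ S, ∀ v ∈ S, u ≠ v → LinearIndependent K ![u, v] := by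
  set L := (t.image (K ∙ ·)).erase ⊥
  have hL : n ≤ L.card := (Nat.le_pred_of_lt h).trans pred_card_le_card_erase
  have hrep : ∀ l ∈ L, ∃ u ∈ t, K ∙ u = l := fun l hl => mem_image.1 (mem_of_mem_erase hl)
  choose! g hgt hg using hrep
  have hg0 : ∀ l ∈ L, g l ≠ 0 := fun l hl h0 =>
    ne_of_mem_erase hl (by rw [← hg l hl, h0, span_singleton_eq_bot.2 rfl])
  refine ⟨L.image g, image_subset_iff.2 hgt, ?_, ?_⟩
  · rwa [card_image_of_injOn fun l hl l' hl' e => by rw [← hg l hl, ← hg l' hl', e]]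
  · simp only [mem_image]
    rintro _ ⟨l, hl, rfl⟩ _ ⟨l', hl', rfl⟩ hne
    refine linearIndependent_pair_of_span_singleton_ne (hg0 l hl) (hg0 l' hl') ?_
    rw [hg l hl, hg l' hl']
    exact fun e => hne (e ▸ rfl)

end Pair

theorem exists_lt_forall_eq_of_card_image_range_le {ι β : Type*} [Fintype ι] [DecidableEq ι]
    [DecidableEq β] (c : ι → ℕ → β) {N n : ℕ} (hc : ∀ i, ((range N).image (c i)).card ≤ n)
    (hN : n ^ Fintype.card ι < N) : ∃ j k, j < k ∧ ∀ i, c i j = c i k := by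
  have hmaps : ∀ k ∈ range N, (fun i => c i k) ∈ Fintype.piFinset fun i => (range N).image (c i) :=
    fun k hk => Fintype.mem_piFinset.2 fun i => mem_image_of_mem _ hk
  have hcard : (Fintype.piFinset fun i => (range N).image (c i)).card < (range N).card := by
    rw [Fintype.card_piFinset, card_range]
    exact (prod_le_pow_card _ _ _ fun i _ => hc i).trans_lt hN
  obtain ⟨j, -, k, -, hne, hjk⟩ := exists_ne_map_eq_of_card_lt_of_maps_to hcard hmaps
  rcases hne.lt_or_gt with h | h
  · exact ⟨j, k, h, fun i => congrFun hjk i⟩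
  · exact ⟨k, j, h, fun i => (congrFun hjk i).symm⟩

theorem Matrix.linearIndependent_pow_mulVec_pair {n : Type*} [Fintype n] [DecidableEq n]
    {M : Matrix n n K} (hM : M.det ≠ 0) {s : n → K} (hs : s ≠ 0)
    (hev : ∀ k : ℕ, 1 ≤ k → ¬ ∃ c : K, M ^ k *ᵥ s = c • s) {j k : ℕ} (hjk : j < k) :
    LinearIndependent K ![M ^ j *ᵥ s, M ^ k *ᵥ s] := by
  have hinj : Function.Injective (M ^ j).mulVec :=
    mulVec_injective_iff_isUnit.2 ((M.isUnit_iff_isUnit_det.2 hM.isUnit).pow j)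
  rw [LinearIndependent.pair_iff' fun h0 => hs (hinj (h0.trans (mulVec_zero _).symm))]
  intro a ha
  refine hev (k - j) (by omega) ⟨a, hinj ?_⟩
  rw [mulVec_mulVec, ← pow_add, Nat.add_sub_cancel' hjk.le, mulVec_smul, ha]

theorem stmt_0 (M : Matrix (Fin 3) (Fin 3) ℂ) (hM : M.det ≠ 0)
    (s : Fin 3 → ℂ) (hs : s ≠ 0)
    (hev : ∀ k : ℕ, 1 ≤ k → ¬ ∃ c : ℂ, (M ^ k) *ᵥ s = c • s)
    (F : Fin 3 → Matrix (Fin 2) (Fin 3) ℂ)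
    (hrank : ∀ i, (F i).rank = 2)
    (hinter : rowSpace (F 0) ⊓ rowSpace (F 1) ⊓ rowSpace (F 2) = ⊥) :
    ∀ n : ℕ, 1 ≤ n →
      ∃ i : Fin 3, ∃ S : Finset (Fin 2 → ℂ),
        (↑S ⊆ {v : Fin 2 → ℂ | ∃ k : ℕ, k ≤ n ^ 3 ∧ v = (F i) *ᵥ ((M ^ k) *ᵥ s)}) ∧
        n ≤ S.card ∧
        (∀ u ∈ S, ∀ v ∈ S, u ≠ v → LinearIndependent ℂ ![u, v]) := by
  classical
  intro n _
  by_contra! hcon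
  have hspan : ⨆ i, LinearMap.ker (F i).mulVecLin = ⊤ := iSup_ker_mulVecLin_eq_top F <|
    eq_bot_iff.2 (hinter ▸ le_inf (le_inf (iInf_le _ 0) (iInf_le _ 1)) (iInf_le _ 2))
  have hker : ∀ i, finrank ℂ (LinearMap.ker (F i).mulVecLin) ≤ 1 := fun i => by
    have := (F i).mulVecLin.finrank_range_add_finrank_ker
    rw [← rank, hrank i, finrank_fin_fun] at this
    omega
  have hlines : ∀ i, ((range (n ^ 3 + 1)).image fun k => ℂ ∙ (F i *ᵥ (M ^ k *ᵥ s))).card ≤ n := by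
    intro i
    by_contra! hlt
    obtain ⟨S, hSt, hSn, hS⟩ := exists_pairwise_linearIndependent_of_lt_card_image_span
      ((range (n ^ 3 + 1)).image fun k => F i *ᵥ (M ^ k *ᵥ s)) (by rwa [image_image])
    obtain ⟨u, hu, v, hv, huv, hdep⟩ := hcon i S (fun w hw => by
      obtain ⟨k, hk, rfl⟩ := mem_image.1 (hSt hw)
      exact ⟨k, Nat.lt_succ_iff.1 (mem_range.1 hk), rfl⟩) hSn
    exact hdep (hS u hu v hv huv)
  obtain ⟨j, k, hjk, hlines_eq⟩ := exists_lt_forall_eq_of_card_image_range_le _ hlines (by simp)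
  exact not_linearIndependent_pair_of_iSup_ker_eq_top (fun i => (F i).mulVecLin) hker hspan
    (by simp) (fun i => not_linearIndependent_pair_of_span_singleton_eq (hlines_eq i))
    (linearIndependent_pow_mulVec_pair hM hs hev hjk)
end

section
/- For all natural numbers i and j with i ≡ j (mod 3), there exists a polynomial P in two variables with integer coefficients such that for all complex numbers a and b, aⁱbʲ + aʲbⁱ = P(ab, a³ + b³). -/
/-! Since `x ^ n + y ^ n` is the Dickson polynomial `Dₙ(x + y, x y)`, applying this to `x³, y³`
expresses `x ^ (3k) + y ^ (3k)` through `x y` and `x³ + y³`. If `j = i + 3k`, then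
`aⁱ bʲ + aʲ bⁱ = (a b)ⁱ (a^(3k) + b^(3k))`. -/

open Polynomial

theorem Polynomial.dickson_one_eval_add {R : Type*} [CommRing R] (x y : R) :
    ∀ n : ℕ, (dickson 1 (x * y) n).eval (x + y) = x ^ n + y ^ n
  | 0 => by norm_num [dickson_zero]
  | 1 => by simp
  | n + 2 => by
    rw [dickson_add_two, eval_sub, eval_mul, eval_mul, eval_X, eval_C,
      dickson_one_eval_add x y n, dickson_one_eval_add x y (n + 1)]
    ring

noncomputable def cubePowerSumPoly (k : ℕ) : MvPolynomial (Fin 2) ℤ :=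
  (dickson 1 (MvPolynomial.X 0 ^ 3) k).eval (MvPolynomial.X 1)

theorem eval₂_cubePowerSumPoly {R : Type*} [CommRing R] (x y : R) (k : ℕ) :
    MvPolynomial.eval₂ (Int.castRingHom R) ![x * y, x ^ 3 + y ^ 3] (cubePowerSumPoly k) =
      x ^ (3 * k) + y ^ (3 * k) := by
  rw [cubePowerSumPoly, ← MvPolynomial.coe_eval₂Hom, ← eval_map_apply, map_dickson]
  simp only [map_pow, MvPolynomial.coe_eval₂Hom, MvPolynomial.eval₂_X]
  simpa [mul_pow, pow_mul] using dickson_one_eval_add (x ^ 3) (y ^ 3) k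

theorem exists_eval₂_eq_pow_mul_pow_add_three_mul {R : Type*} [CommRing R] (i k : ℕ) :
    ∃ P : MvPolynomial (Fin 2) ℤ, ∀ x y : R,
      x ^ i * y ^ (i + 3 * k) + x ^ (i + 3 * k) * y ^ i =
        MvPolynomial.eval₂ (Int.castRingHom R) ![x * y, x ^ 3 + y ^ 3] P := by
  refine ⟨MvPolynomial.X 0 ^ i * cubePowerSumPoly k, fun x y => ?_⟩
  rw [MvPolynomial.eval₂_mul, eval₂_cubePowerSumPoly, MvPolynomial.eval₂_pow,
    MvPolynomial.eval₂_X]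
  simp only [Matrix.cons_val_zero]
  ring

theorem stmt_4 (i j : ℕ) (hij : i % 3 = j % 3) :
    ∃ P : MvPolynomial (Fin 2) ℤ, ∀ a b : ℂ,
      a ^ i * b ^ j + a ^ j * b ^ i =
        MvPolynomial.eval₂ (Int.castRingHom ℂ) ![a * b, a ^ 3 + b ^ 3] P := by
  wlog hle : i ≤ j generalizing i j
  · simpa only [add_comm] using this j i hij.symm (le_of_not_ge hle)
  obtain ⟨k, hk⟩ := (Nat.modEq_iff_dvd' hle).mp hij
  obtain rfl : j = i + 3 * k := by omega
  exact exists_eval₂_eq_pow_mul_pow_add_three_mul i k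
end

section
/- Let B, C ∈ ℂ and suppose the two roots of the quadratic x² + Bx + C (counted with multiplicity) have the same absolute value. Then B·|C| = conj(B)·C and B²·conj(C) = conj(B)²·C. If moreover B ≠ 0 and C ≠ 0, then Arg(B²) = Arg(C). -/
/-!
If `B = -(α + β)` and `C = α β` with `|α| = |β| = r`, then `conj α = r² / α` and `conj β = r² / β`,
so `conj B · C = |C| · B`. Conjugating this identity and multiplying through gives the remaining
two claims: `B² conj C = conj B² C`, and `B² |C| = |B|² C`, i.e. `B²` is a positive real multiple
of `C`.
-/

open Complex ComplexConjugate

lemma conj_add_mul_mul_of_norm_eq {α β : ℂ} (h : ‖α‖ = ‖β‖) :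
    conj (α + β) * (α * β) = ‖α * β‖ * (α + β) := by
  have hα : conj α * α = ‖α‖ * ‖β‖ := by rw [conj_mul', ← h, sq]
  have hβ : conj β * β = ‖α‖ * ‖β‖ := by rw [conj_mul', h, sq]
  rw [map_add, norm_mul, ofReal_mul]
  linear_combination β * hα + α * hβ

lemma sq_mul_conj_eq_of_mul_norm_eq {B C : ℂ} (h : B * ‖C‖ = conj B * C) :
    B ^ 2 * conj C = conj B ^ 2 * C := by
  have hc : conj B * ‖C‖ = B * conj C := by simpa using congrArg conj h
  linear_combination conj B * h - B * hc

lemma arg_sq_eq_of_mul_norm_eq {B C : ℂ} (hB : B ≠ 0) (hC : C ≠ 0)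
    (h : B * ‖C‖ = conj B * C) : arg (B ^ 2) = arg C := by
  have hC' : (‖C‖ : ℂ) ≠ 0 := ofReal_ne_zero.mpr (norm_ne_zero_iff.mpr hC)
  have hsq : B ^ 2 = ((‖B‖ ^ 2 / ‖C‖ : ℝ) : ℂ) * C := by
    push_cast
    field_simp
    linear_combination B * h + C * mul_conj' B
  rw [hsq, arg_real_mul C (by positivity)]

theorem stmt_5 (B C : ℂ)
    (h : ∃ α β : ℂ, α + β = -B ∧ α * β = C ∧ ‖α‖ = ‖β‖) :
    B * (‖C‖ : ℂ) = (starRingEnd ℂ) B * C ∧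
    B ^ 2 * (starRingEnd ℂ) C = ((starRingEnd ℂ) B) ^ 2 * C ∧
    (B ≠ 0 → C ≠ 0 → Complex.arg (B ^ 2) = Complex.arg C) := by
  obtain ⟨α, β, hsum, rfl, hnorm⟩ := h
  have key : B * ‖α * β‖ = conj B * (α * β) := by
    obtain rfl : B = -(α + β) := by linear_combination hsum
    rw [map_neg, neg_mul, neg_mul, conj_add_mul_mul_of_norm_eq hnorm, mul_comm]
  exact ⟨key, sq_mul_conj_eq_of_mul_norm_eq key, fun hB hC => arg_sq_eq_of_mul_norm_eq hB hC key⟩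
end

section
/- Let B, C, D ∈ ℂ and suppose the three roots of the cubic x³ + Bx² + Cx + D (counted with multiplicity) all have the same absolute value. Then C·|C|² = conj(B)·|B|²·D. -/
/-!
If `|α| = |β| = |γ| = r`, then `conj α = r² / α` and similarly for `β, γ`, so conjugating the first
elementary symmetric function gives `conj (α + β + γ) · αβγ = r² (αβ + βγ + γα)`, that is
`conj B · D = r² C`. Taking norms (with `|D| = r³`) gives `|C| = r |B|`, and then
`C |C|² = r² C |B|² = conj B · D · |B|²`.
-/

open ComplexConjugate

namespace RCLike

variable {K : Type*} [RCLike K]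

theorem conj_add_add_mul_mul_mul {α β γ : K} {r : ℝ} (hα : ‖α‖ = r) (hβ : ‖β‖ = r)
    (hγ : ‖γ‖ = r) :
    conj (α + β + γ) * (α * β * γ) = (r : K) ^ 2 * (α * β + β * γ + γ * α) := by
  have hα' : conj α * α = (r : K) ^ 2 := by rw [conj_mul, hα]
  have hβ' : conj β * β = (r : K) ^ 2 := by rw [conj_mul, hβ]
  have hγ' : conj γ * γ = (r : K) ^ 2 := by rw [conj_mul, hγ]
  simp only [map_add]
  linear_combination (β * γ) * hα' + (γ * α) * hβ' + (α * β) * hγ'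

theorem norm_mul_add_mul_add_mul {α β γ : K} {r : ℝ} (hα : ‖α‖ = r) (hβ : ‖β‖ = r)
    (hγ : ‖γ‖ = r) :
    ‖α * β + β * γ + γ * α‖ = r * ‖α + β + γ‖ := by
  rcases eq_or_ne r 0 with rfl | hr
  · simp_all
  have hnorm := congrArg norm (conj_add_add_mul_mul_mul hα hβ hγ)
  simp only [norm_mul, norm_conj, norm_pow, norm_ofReal, hα, hβ, hγ] at hnorm
  rw [abs_of_nonneg (hα ▸ norm_nonneg α)] at hnorm
  exact mul_left_cancel₀ (pow_ne_zero 2 hr) (by linear_combination -hnorm)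

end RCLike

theorem stmt_6 (B C D : ℂ)
    (h : ∃ α β γ : ℂ, α + β + γ = -B ∧ α * β + β * γ + γ * α = C ∧ α * β * γ = -D ∧
      ‖α‖ = ‖β‖ ∧ ‖β‖ = ‖γ‖) :
    C * ((‖C‖ : ℝ) : ℂ) ^ 2 = (starRingEnd ℂ) B * ((‖B‖ : ℝ) : ℂ) ^ 2 * D := by
  obtain ⟨α, β, γ, hB, hC, hD, hαβ, hβγ⟩ := h
  have hβ : ‖β‖ = ‖α‖ := hαβ.symm
  have hγ : ‖γ‖ = ‖α‖ := (hαβ.trans hβγ).symm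
  have key := RCLike.conj_add_add_mul_mul_mul rfl hβ hγ
  have hnorm := RCLike.norm_mul_add_mul_add_mul rfl hβ hγ
  rw [hB, hC, hD, map_neg, neg_mul_neg] at key
  rw [hB, hC, norm_neg] at hnorm
  rw [hnorm, Complex.ofReal_mul]
  linear_combination (-(‖B‖ : ℂ) ^ 2) * key
end

section
/- Let α, β, δ ∈ ℂ with |α| = |β|, α ≠ β, δ ≠ 0, and |α + δ| = |β + δ|. Then there exist real numbers r and s such that rδ = α + β and sδ² = αβ. -/
/-!
Dividing by `δ` reduces to `a = α / δ`, `b = β / δ` with `|a| = |b|` and `|a + 1| = |b + 1|`.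
Expanding `|a + 1|² = |a|² + 2 Re a + 1` gives `Re a = Re b`, hence `Im a = ± Im b`, and `a ≠ b`
forces `b = conj a`. Then `a + b = 2 Re a` and `a b = |a|²` are real.
-/

open ComplexConjugate

namespace Complex

theorem eq_conj_of_norm_eq_of_norm_add_one_eq {a b : ℂ} (h : ‖a‖ = ‖b‖)
    (h₁ : ‖a + 1‖ = ‖b + 1‖) (hne : a ≠ b) : b = conj a := by
  have sq_norm_eq (z : ℂ) : ‖z‖ ^ 2 = z.re ^ 2 + z.im ^ 2 := by
    rw [Complex.sq_norm, normSq_apply]; ring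
  have hsq : a.re ^ 2 + a.im ^ 2 = b.re ^ 2 + b.im ^ 2 := by
    rw [← sq_norm_eq, ← sq_norm_eq, h]
  have hsq₁ : (a + 1).re ^ 2 + (a + 1).im ^ 2 = (b + 1).re ^ 2 + (b + 1).im ^ 2 := by
    rw [← sq_norm_eq, ← sq_norm_eq, h₁]
  simp only [add_re, one_re, add_im, one_im, add_zero] at hsq₁
  have hre : a.re = b.re := by linarith
  have him : a.im = -b.im := by
    rcases sq_eq_sq_iff_eq_or_eq_neg.mp (show a.im ^ 2 = b.im ^ 2 by rw [hre] at hsq; linarith)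
      with him | him
    · exact absurd (ext hre him) hne
    · exact him
  exact ext hre.symm (by simp [him])

end Complex

theorem stmt_8 (α β δ : ℂ) (habs : ‖α‖ = ‖β‖) (hne : α ≠ β)
    (hδ : δ ≠ 0) (hshift : ‖α + δ‖ = ‖β + δ‖) :
    ∃ r s : ℝ, (r : ℂ) * δ = α + β ∧ (s : ℂ) * δ ^ 2 = α * β := by
  set a := α / δ
  have hα : α = a * δ := (div_mul_cancel₀ α hδ).symm
  have hβ : β = β / δ * δ := (div_mul_cancel₀ β hδ).symm
  have hconj : β / δ = conj a := by
    refine Complex.eq_conj_of_norm_eq_of_norm_add_one_eq ?_ ?_ ?_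
    · simp only [a, norm_div, habs]
    · rw [div_add_one hδ, div_add_one hδ, norm_div, norm_div, hshift]
    · exact fun h => hne ((div_left_inj' hδ).mp h)
  refine ⟨2 * a.re, Complex.normSq a, ?_, ?_⟩
  · rw [hα, hβ, hconj, ← add_mul, Complex.add_conj]
  · rw [hα, hβ, hconj, Complex.normSq_eq_conj_mul_self]
    ring
end

section
/- Let M be a 2×2 complex matrix and δ ∈ ℂ with δ ≠ 0, and set M' = M + δI. Suppose the two eigenvalues of M are distinct and have equal absolute value, and the two eigenvalues of M' have equal absolute value. Then there exist real numbers r and s such that tr(M) = rδ and det(M) = sδ². -/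
/-!
Divide by `δ`: the eigenvalues `u = α / δ`, `v = β / δ` of `M / δ` are distinct and equidistant
from `0`; since the eigenvalues of `M'` are `α + δ` and `β + δ`, they are also equidistant from
`-1`. Two distinct points equidistant from `0` and from `-1` are reflections of each other in the
real axis, so `v = conj u`, and then `tr M / δ = u + conj u` and `det M / δ ^ 2 = u * conj u`
are real.
-/

open Matrix ComplexConjugate

theorem eq_and_eq_or_eq_and_eq_of_add_eq_add_of_mul_eq_mul {R : Type*} [CommRing R]
    [NoZeroDivisors R] {a b c d : R} (hadd : a + b = c + d) (hmul : a * b = c * d) :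
    a = c ∧ b = d ∨ a = d ∧ b = c := by
  have h : (a - c) * (a - d) = 0 := by linear_combination a * hadd - hmul
  rcases mul_eq_zero.mp h with h | h
  · exact .inl ⟨sub_eq_zero.mp h, by linear_combination hadd - h⟩
  · exact .inr ⟨sub_eq_zero.mp h, by linear_combination hadd - h⟩

theorem Matrix.trace_add_smul_one_fin_two {R : Type*} [CommRing R]
    (M : Matrix (Fin 2) (Fin 2) R) (c : R) : (M + c • 1).trace = M.trace + 2 * c := by
  rw [trace_add, trace_smul, trace_one, Fintype.card_fin, smul_eq_mul, Nat.cast_ofNat, mul_comm]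

theorem Matrix.det_add_smul_one_fin_two {R : Type*} [CommRing R]
    (M : Matrix (Fin 2) (Fin 2) R) (c : R) :
    (M + c • 1).det = M.det + c * M.trace + c ^ 2 := by
  simp only [det_fin_two, trace_fin_two, add_apply, smul_apply, smul_eq_mul, one_apply_eq,
    one_apply_ne zero_ne_one, one_apply_ne one_ne_zero, mul_one, mul_zero, add_zero]
  ring

theorem Complex.eq_conj_of_norm_eq_of_norm_add_one_eq_s9 {u v : ℂ} (huv : u ≠ v)
    (h₀ : ‖u‖ = ‖v‖) (h₁ : ‖u + 1‖ = ‖v + 1‖) : v = conj u := by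
  have hsq₀ : normSq u = normSq v := by rw [← Complex.sq_norm, ← Complex.sq_norm, h₀]
  have hsq₁ : normSq (u + 1) = normSq (v + 1) := by
    rw [← Complex.sq_norm, ← Complex.sq_norm, h₁]
  simp only [normSq_apply, add_re, add_im, one_re, one_im, add_zero] at hsq₀ hsq₁
  have hre : v.re = u.re := by linarith
  have him : (v.im - u.im) * (v.im + u.im) = 0 := by
    rw [hre] at hsq₀; linear_combination -hsq₀
  rcases mul_eq_zero.mp him with h | h
  · exact absurd (Complex.ext hre (by linarith)).symm huv
  · exact Complex.ext hre (by rw [conj_im]; linarith)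

theorem norm_add_eq_norm_add_of_vieta_shift {α β α' β' s p δ : ℂ}
    (hsum : α + β = s) (hprod : α * β = p) (hsum' : α' + β' = s + 2 * δ)
    (hprod' : α' * β' = p + δ * s + δ ^ 2) (habs' : ‖α'‖ = ‖β'‖) :
    ‖α + δ‖ = ‖β + δ‖ := by
  rcases eq_and_eq_or_eq_and_eq_of_add_eq_add_of_mul_eq_mul
      (a := α') (b := β') (c := α + δ) (d := β + δ)
      (by linear_combination hsum' - hsum)
      (by linear_combination hprod' - hprod - δ * hsum) with ⟨h₁, h₂⟩ | ⟨h₁, h₂⟩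
  · rwa [← h₁, ← h₂]
  · rw [← h₁, ← h₂, habs']

theorem stmt_9 (M : Matrix (Fin 2) (Fin 2) ℂ) (δ : ℂ) (hδ : δ ≠ 0)
    (M' : Matrix (Fin 2) (Fin 2) ℂ) (hM' : M' = M + δ • (1 : Matrix (Fin 2) (Fin 2) ℂ))
    (hM : ∃ α β : ℂ, α + β = M.trace ∧ α * β = M.det ∧ α ≠ β ∧
      ‖α‖ = ‖β‖)
    (hM'eig : ∃ α' β' : ℂ, α' + β' = M'.trace ∧ α' * β' = M'.det ∧
      ‖α'‖ = ‖β'‖) :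
    ∃ r s : ℝ, M.trace = (r : ℂ) * δ ∧ M.det = (s : ℂ) * δ ^ 2 := by
  obtain ⟨α, β, hsum, hprod, hne, habs⟩ := hM
  obtain ⟨α', β', hsum', hprod', habs'⟩ := hM'eig
  rw [hM', trace_add_smul_one_fin_two] at hsum'
  rw [hM', det_add_smul_one_fin_two] at hprod'
  have habsδ := norm_add_eq_norm_add_of_vieta_shift hsum hprod hsum' hprod' habs'
  set u := α / δ
  have hα : α = u * δ := (div_mul_cancel₀ α hδ).symm
  have hβ : β = β / δ * δ := (div_mul_cancel₀ β hδ).symm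
  have hv : β / δ = conj u := by
    refine Complex.eq_conj_of_norm_eq_of_norm_add_one_eq_s9 ?_ ?_ ?_
    · exact fun h => hne (by rw [hα, hβ, h])
    · simp [u, habs]
    · rw [div_add_one hδ, div_add_one hδ, norm_div, norm_div, habsδ]
  refine ⟨2 * u.re, Complex.normSq u, ?_, ?_⟩
  · rw [← hsum, hα, hβ, hv, ← add_mul, Complex.add_conj]
  · rw [← hprod, hα, hβ, hv, mul_mul_mul_comm, Complex.mul_conj, sq]
end

section
/- Let a, b ∈ ℂ, set X = ab and Y = a³ + b³, and suppose X ≠ 1, X ≠ −1, X² + X + Y ≠ 0, 4(X−1)²(X+1) ≠ (Y+2)², and that X and Y are not both real. Then at least one of the matrices M₁₀, M₁₁ has both eigenvalues nonzero and of distinct absolute values. -/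
/-!
Write `c = X - 1`. The matrix `M₁₀` has trace `Y + 2` and determinant `c² (X + 1)`, and
`M₁₁ = M₁₀ + c I`, so if `α, β` are the eigenvalues of `M₁₀` then those of `M₁₁` are
`α + c, β + c`. The hypotheses make `α ≠ β` and all four eigenvalues nonzero. If both
matrices failed, `α/c` and `β/c` would be two distinct points equidistant from `0` and from
`-1`, hence complex conjugates; then `(α + β)/c` and `αβ/c² = X + 1` are real, so `X`, `c`
and `Y = c · (α + β)/c - 2` are real.
-/

open Matrix ComplexConjugate Polynomial

/-- A 2×2 complex matrix has both eigenvalues nonzero and of distinct absolute values: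
the eigenvalues are the roots α, β of the characteristic polynomial, equivalently the
pair with α + β = tr A and α·β = det A. -/
def nonzeroDistinctNormEigenvalues (A : Matrix (Fin 2) (Fin 2) ℂ) : Prop :=
  ∃ α β : ℂ, α + β = A.trace ∧ α * β = A.det ∧ α ≠ 0 ∧ β ≠ 0 ∧
    ‖α‖ ≠ ‖β‖

theorem IsAlgClosed.exists_add_eq_and_mul_eq {K : Type*} [Field K] [IsAlgClosed K] (s p : K) :
    ∃ α β : K, α + β = s ∧ α * β = p := by
  obtain ⟨α, hα⟩ := IsAlgClosed.exists_root (X ^ 2 - C s * X + C p)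
    (by rw [show (X ^ 2 - C s * X + C p : K[X]).degree = 2 by compute_degree!]; decide)
  refine ⟨α, s - α, by ring, ?_⟩
  simp only [IsRoot, eval_add, eval_sub, eval_pow, eval_mul, eval_X, eval_C] at hα
  linear_combination -hα

theorem Complex.eq_conj_of_norm_eq_of_norm_add_one_eq_s10 {p q : ℂ} (hpq : p ≠ q)
    (h0 : ‖p‖ = ‖q‖) (h1 : ‖p + 1‖ = ‖q + 1‖) : q = conj p := by
  have h0' : Complex.normSq p = Complex.normSq q := by simp only [← Complex.sq_norm, h0]
  have h1' : Complex.normSq (p + 1) = Complex.normSq (q + 1) := by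
    simp only [← Complex.sq_norm, h1]
  simp only [Complex.normSq_apply, Complex.add_re, Complex.add_im, Complex.one_re,
    Complex.one_im, add_zero] at h0' h1'
  have hre : p.re = q.re := by linarith
  have him : (q.im - p.im) * (q.im + p.im) = 0 := by
    linear_combination -h0' + (p.re + q.re) * hre
  rcases mul_eq_zero.mp him with h | h
  · exact absurd (Complex.ext hre (by linarith)) hpq
  · exact Complex.ext (by rw [Complex.conj_re, hre]) (by rw [Complex.conj_im]; linarith)

theorem Complex.im_div_eq_zero_of_norm_eq_of_norm_add_eq {α β c : ℂ} (hc : c ≠ 0)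
    (hαβ : α ≠ β) (h0 : ‖α‖ = ‖β‖) (h1 : ‖α + c‖ = ‖β + c‖) :
    ((α + β) / c).im = 0 ∧ (α * β / c ^ 2).im = 0 := by
  have hconj : β / c = conj (α / c) := by
    refine Complex.eq_conj_of_norm_eq_of_norm_add_one_eq_s10 ?_ ?_ ?_
    · exact fun h => hαβ ((div_left_inj' hc).mp h)
    · simp only [norm_div, h0]
    · rw [div_add_one hc, div_add_one hc, norm_div, norm_div, h1]
  have hsum : (α + β) / c = ↑(2 * (α / c).re) := by
    rw [add_div, hconj, Complex.add_conj]
  have hprod : α * β / c ^ 2 = ↑(Complex.normSq (α / c)) := by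
    rw [← Complex.mul_conj, ← hconj]; field_simp
  rw [hsum, hprod]
  exact ⟨Complex.ofReal_im _, Complex.ofReal_im _⟩

theorem stmt_10 (a b X Y : ℂ) (hX : X = a * b) (hY : Y = a ^ 3 + b ^ 3)
    (hX1 : X ≠ 1) (hX2 : X ≠ -1) (hXY : X ^ 2 + X + Y ≠ 0)
    (h4 : 4 * (X - 1) ^ 2 * (X + 1) ≠ (Y + 2) ^ 2)
    (hreal : ¬ (X.im = 0 ∧ Y.im = 0)) :
    nonzeroDistinctNormEigenvalues
        !![a ^ 3 + 1, a + b ^ 2; a ^ 2 + b, b ^ 3 + 1] ∨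
      nonzeroDistinctNormEigenvalues
        !![a ^ 3 + a * b, a + b ^ 2; a ^ 2 + b, a * b + b ^ 3] := by
  obtain ⟨α, β, hsum, hprod⟩ :=
    IsAlgClosed.exists_add_eq_and_mul_eq (Y + 2) ((X - 1) ^ 2 * (X + 1))
  have hc : X - 1 ≠ 0 := sub_ne_zero.mpr hX1
  have hX2' : X + 1 ≠ 0 := by rwa [Ne, add_eq_zero_iff_eq_neg]
  have hprod0 : α * β ≠ 0 := hprod ▸ mul_ne_zero (pow_ne_zero 2 hc) hX2'
  have hprod0' : (α + (X - 1)) * (β + (X - 1)) ≠ 0 := by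
    convert mul_ne_zero hc hXY using 1
    linear_combination hprod + (X - 1) * hsum
  have hαβ : α ≠ β := fun h => h4 <| by
    linear_combination -4 * hprod + (α + β + Y + 2) * hsum - (α - β) * h
  by_cases h0 : ‖α‖ = ‖β‖
  · by_cases h1 : ‖α + (X - 1)‖ = ‖β + (X - 1)‖
    · obtain ⟨hT, hD⟩ := Complex.im_div_eq_zero_of_norm_eq_of_norm_add_eq hc hαβ h0 h1
      have hXim : X.im = 0 := by
        rw [hprod, mul_div_cancel_left₀ _ (pow_ne_zero 2 hc)] at hD; simpa using hD
      have hYim : Y.im = 0 := by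
        have hY' : Y = (X - 1) * ((α + β) / (X - 1)) - 2 := by
          rw [mul_div_cancel₀ _ hc, hsum]; ring
        rw [hY']; simp [hXim, hT]
      exact absurd ⟨hXim, hYim⟩ hreal
    · refine .inr ⟨α + (X - 1), β + (X - 1), ?_, ?_, left_ne_zero_of_mul hprod0',
        right_ne_zero_of_mul hprod0', h1⟩
      · rw [trace_fin_two_of]; subst hX hY; linear_combination hsum
      · rw [det_fin_two_of]; subst hX hY; linear_combination hprod + (a * b - 1) * hsum
  · refine .inl ⟨α, β, ?_, ?_, left_ne_zero_of_mul hprod0, right_ne_zero_of_mul hprod0, h0⟩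
    · rw [trace_fin_two_of]; subst hY; linear_combination hsum
    · rw [det_fin_two_of]; subst hX; linear_combination hprod
end

section
/- Let a, b ∈ ℂ, set X = ab and Y = a³ + b³, and suppose X² + X + Y = 0 and X is not a real number. Then the matrix M₁₂ has both eigenvalues nonzero and of distinct absolute values. -/
open Matrix

/-!
Under `X² + X + Y = 0` the trace and determinant of `M₁₂` collapse to `t = X (X - 1)³` and
`d = -X² (X - 1)⁵`, so `t² / d = 1 - X`. If the eigenvalues `α, β` had equal modulus, then
`u = α / β` would lie on the unit circle and `t² / d = u + u⁻¹ + 2 = 2 Re u + 2` would be real;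
since `X` is not real, it is not.
-/

open ComplexConjugate

namespace Complex

theorem im_add_sq_div_mul_eq_zero_of_norm_eq {α β : ℂ} (hα : α ≠ 0) (hβ : β ≠ 0)
    (h : ‖α‖ = ‖β‖) : ((α + β) ^ 2 / (α * β)).im = 0 := by
  have hu : ‖α / β‖ = 1 := by rw [norm_div, h, div_self (norm_ne_zero_iff.mpr hβ)]
  have hsum : (α + β) ^ 2 / (α * β) = α / β + conj (α / β) + 2 := by
    rw [← inv_eq_conj hu]
    field_simp
    ring
  rw [hsum, ← conj_eq_iff_im, map_add, map_add, conj_conj, map_ofNat, add_comm (α / β)]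

end Complex

theorem nonzeroDistinctNormEigenvalues_of_im_trace_sq_div_det_ne_zero
    {A : Matrix (Fin 2) (Fin 2) ℂ} (hdet : A.det ≠ 0) (him : (A.trace ^ 2 / A.det).im ≠ 0) :
    nonzeroDistinctNormEigenvalues A := by
  obtain ⟨δ, hδ⟩ := IsAlgClosed.exists_eq_mul_self (A.trace ^ 2 - 4 * A.det)
  have hsum : (A.trace + δ) / 2 + (A.trace - δ) / 2 = A.trace := by ring
  have hprod : (A.trace + δ) / 2 * ((A.trace - δ) / 2) = A.det := by
    linear_combination (1 / 4 : ℂ) * hδ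
  have hprod_ne : (A.trace + δ) / 2 * ((A.trace - δ) / 2) ≠ 0 := hprod ▸ hdet
  have hα := left_ne_zero_of_mul hprod_ne
  have hβ := right_ne_zero_of_mul hprod_ne
  refine ⟨_, _, hsum, hprod, hα, hβ, fun hnorm => him ?_⟩
  have := Complex.im_add_sq_div_mul_eq_zero_of_norm_eq hα hβ hnorm
  rwa [hsum, hprod] at this

def M₁₂ (a b : ℂ) : Matrix (Fin 2) (Fin 2) ℂ :=
  !![a ^ 6 + 2 * a ^ 4 * b + a ^ 3 + 3 * a ^ 2 * b ^ 2 + a * b ^ 4,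
     a ^ 4 + 3 * a ^ 2 * b + 2 * a * b ^ 3 + b ^ 5 + b ^ 2;
     a ^ 5 + 2 * a ^ 3 * b + a ^ 2 + 3 * a * b ^ 2 + b ^ 4,
     a ^ 4 * b + 3 * a ^ 2 * b ^ 2 + 2 * a * b ^ 4 + b ^ 6 + b ^ 3]

section

variable {a b : ℂ} (h : (a * b) ^ 2 + a * b + (a ^ 3 + b ^ 3) = 0)
include h

theorem trace_M₁₂ : (M₁₂ a b).trace = a * b * (a * b - 1) ^ 3 := by
  rw [M₁₂, trace_fin_two_of]
  linear_combination (a ^ 3 + b ^ 3 - (a * b) ^ 2 + 2 * (a * b) + 1) * h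

theorem det_M₁₂ : (M₁₂ a b).det = -((a * b) ^ 2 * (a * b - 1) ^ 5) := by
  rw [M₁₂, det_fin_two_of]
  linear_combination ((a * b - 1) * (a ^ 3 + b ^ 3) ^ 2
    + (-1 - 3 * (a * b) + 5 * (a * b) ^ 2 - (a * b) ^ 3) * (a ^ 3 + b ^ 3)
    + (-2 * (a * b) - 3 * (a * b) ^ 2 + 9 * (a * b) ^ 3 - 5 * (a * b) ^ 4 + (a * b) ^ 5)) * h

end

theorem stmt_11 (a b X Y : ℂ) (hX : X = a * b) (hY : Y = a ^ 3 + b ^ 3)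
    (hXY : X ^ 2 + X + Y = 0) (hXreal : X.im ≠ 0) :
    nonzeroDistinctNormEigenvalues
      !![a ^ 6 + 2 * a ^ 4 * b + a ^ 3 + 3 * a ^ 2 * b ^ 2 + a * b ^ 4,
         a ^ 4 + 3 * a ^ 2 * b + 2 * a * b ^ 3 + b ^ 5 + b ^ 2;
         a ^ 5 + 2 * a ^ 3 * b + a ^ 2 + 3 * a * b ^ 2 + b ^ 4,
         a ^ 4 * b + 3 * a ^ 2 * b ^ 2 + 2 * a * b ^ 4 + b ^ 6 + b ^ 3] := by
  subst hX hY
  change nonzeroDistinctNormEigenvalues (M₁₂ a b)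
  have hX0 : a * b ≠ 0 := fun h => hXreal (by simp [h])
  have hX1 : a * b - 1 ≠ 0 := fun h => hXreal (by simp [sub_eq_zero.mp h])
  have hdet : (M₁₂ a b).det ≠ 0 := by rw [det_M₁₂ hXY]; simp [hX0, hX1]
  have hratio : (M₁₂ a b).trace ^ 2 / (M₁₂ a b).det = 1 - a * b := by
    rw [div_eq_iff hdet, trace_M₁₂ hXY, det_M₁₂ hXY]
    ring
  refine nonzeroDistinctNormEigenvalues_of_im_trace_sq_div_det_ne_zero hdet ?_
  rw [hratio, Complex.sub_im, Complex.one_im, zero_sub, neg_ne_zero]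
  exact hXreal
end

section
/- Let a, b ∈ ℂ with ab ≠ 0, ab ≠ 1, and a³ ≠ b³. Let F be the 2×3 complex matrix [[a, 0, 1],[1, 0, b]] and M₄ the 3×3 complex matrix [[a³, 2a, b],[a², ab+1, b²],[a, 2b, b³]]. Then each of the three matrices F, F·M₄, F·M₄² has rank 2, and the intersection of the row spaces of F, F·M₄, and F·M₄² is the zero subspace of ℂ³. -/
/-!
Since `det M₄ = ab(ab - 1)³ ≠ 0`, right multiplication by powers of `M₄` preserves rank, and `F`
has rank 2 because of its minor `ab - 1` on columns 0 and 2. The row space of `F M₄ᵏ` is the image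
under `M₄ᵏ` of the row space of `F`, which is orthogonal to `e = (0, 1, 0)`. Write `v = u M₄²` for
a vector `v` in all three row spaces. Then invertibility of `M₄` makes `u` orthogonal to `e`, `M₄ e`
and `M₄² e`. These three vectors form a basis because their determinant is `4(ab - 1)(a³ - b³)`,
so `u = 0`.
-/

open Matrix

theorem rank_eq_of_isUnit_det_submatrix {m : ℕ} {n K : Type*} [Fintype n] [Field K]
    (A : Matrix (Fin m) n K) (c : Fin m → n) (h : IsUnit (A.submatrix id c).det) :
    A.rank = m := by
  refine le_antisymm (A.rank_le_card_height.trans_eq (Fintype.card_fin m)) ?_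
  calc m = (A.submatrix id c).rank := by
        rw [rank_of_isUnit _ ((isUnit_iff_isUnit_det _).2 h), Fintype.card_fin]
    _ ≤ A.rank := rank_submatrix_le A id c

theorem mem_rowSpace_iff {X : Matrix (Fin 2) (Fin 3) ℂ} {v : Fin 3 → ℂ} :
    v ∈ rowSpace X ↔ ∃ w, w ᵥ* X = v := by
  change v ∈ Submodule.span ℂ (Set.range X.row) ↔ _
  rw [← range_vecMulLinear]
  rfl

theorem dotProduct_eq_zero_of_mem_rowSpace {X : Matrix (Fin 2) (Fin 3) ℂ} {e v : Fin 3 → ℂ}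
    (hXe : X *ᵥ e = 0) (hv : v ∈ rowSpace X) : v ⬝ᵥ e = 0 := by
  obtain ⟨w, rfl⟩ := mem_rowSpace_iff.1 hv
  rw [← dotProduct_mulVec, hXe, dotProduct_zero]

theorem exists_mem_rowSpace_of_mem_rowSpace_mul {X : Matrix (Fin 2) (Fin 3) ℂ}
    {P : Matrix (Fin 3) (Fin 3) ℂ} {v : Fin 3 → ℂ} (hv : v ∈ rowSpace (X * P)) :
    ∃ u ∈ rowSpace X, u ᵥ* P = v := by
  obtain ⟨w, rfl⟩ := mem_rowSpace_iff.1 hv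
  exact ⟨w ᵥ* X, mem_rowSpace_iff.2 ⟨w, rfl⟩, vecMul_vecMul w X P⟩

theorem rowSpace_inf_rowSpace_mul_inf_rowSpace_mul_sq_eq_bot {F : Matrix (Fin 2) (Fin 3) ℂ}
    {M : Matrix (Fin 3) (Fin 3) ℂ} {e : Fin 3 → ℂ} (hFe : F *ᵥ e = 0) (hM : IsUnit M.det)
    (hK : (of ![e, M *ᵥ e, M ^ 2 *ᵥ e]).det ≠ 0) :
    rowSpace F ⊓ rowSpace (F * M) ⊓ rowSpace (F * M ^ 2) = ⊥ := by
  rw [eq_bot_iff]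
  rintro v ⟨⟨hv₀, hv₁⟩, hv₂⟩
  obtain ⟨u₁, hu₁, rfl⟩ := exists_mem_rowSpace_of_mem_rowSpace_mul hv₁
  obtain ⟨u₂, hu₂, hu₂₁⟩ := exists_mem_rowSpace_of_mem_rowSpace_mul hv₂
  have hu : u₂ ᵥ* M = u₁ := by
    refine vecMul_injective_of_isUnit ((isUnit_iff_isUnit_det M).2 hM) ?_
    simp only [vecMul_vecMul, ← sq, hu₂₁]
  have hKu : of ![e, M *ᵥ e, M ^ 2 *ᵥ e] *ᵥ u₂ = 0 := by
    have hrow (i : Fin 3) : (of ![e, M *ᵥ e, M ^ 2 *ᵥ e] *ᵥ u₂) i =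
        u₂ ⬝ᵥ ![e, M *ᵥ e, M ^ 2 *ᵥ e] i := dotProduct_comm _ _
    ext i
    fin_cases i <;> rw [hrow, Pi.zero_apply]
    · exact dotProduct_eq_zero_of_mem_rowSpace hFe hu₂
    · change u₂ ⬝ᵥ (M *ᵥ e) = 0
      rw [dotProduct_mulVec, hu]
      exact dotProduct_eq_zero_of_mem_rowSpace hFe hu₁
    · change u₂ ⬝ᵥ (M ^ 2 *ᵥ e) = 0
      rw [dotProduct_mulVec, hu₂₁]
      exact dotProduct_eq_zero_of_mem_rowSpace hFe hv₀
  rw [← hu, eq_zero_of_mulVec_eq_zero hK hKu, zero_vecMul, zero_vecMul]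
  exact Submodule.zero_mem _

theorem stmt_16 (a b : ℂ) (hab0 : a * b ≠ 0) (hab1 : a * b ≠ 1) (hab3 : a ^ 3 ≠ b ^ 3)
    (F : Matrix (Fin 2) (Fin 3) ℂ) (hF : F = !![a, 0, 1; 1, 0, b])
    (M₄ : Matrix (Fin 3) (Fin 3) ℂ)
    (hM₄ : M₄ = !![a ^ 3, 2 * a, b; a ^ 2, a * b + 1, b ^ 2; a, 2 * b, b ^ 3]) :
    F.rank = 2 ∧ (F * M₄).rank = 2 ∧ (F * M₄ ^ 2).rank = 2 ∧
    rowSpace F ⊓ rowSpace (F * M₄) ⊓ rowSpace (F * M₄ ^ 2) = ⊥ := by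
  subst hF
  have hab1' : a * b - 1 ≠ 0 := sub_ne_zero.2 hab1
  have hdet : M₄.det = a * b * (a * b - 1) ^ 3 := by
    rw [hM₄]
    simp only [det_fin_three, Fin.isValue, of_apply, cons_val', cons_val_zero, cons_val_fin_one,
      cons_val_one, cons_val]
    ring
  have hdetM₄ : IsUnit M₄.det := by
    rw [hdet]; exact (mul_ne_zero hab0 (pow_ne_zero 3 hab1')).isUnit
  have hrank : (!![a, 0, 1; 1, 0, b] : Matrix (Fin 2) (Fin 3) ℂ).rank = 2 := by
    refine rank_eq_of_isUnit_det_submatrix _ ![0, 2] ?_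
    have : (!![a, 0, 1; 1, 0, b].submatrix id ![0, 2]).det = a * b - 1 := by
      simp [det_fin_two]
    exact this ▸ hab1'.isUnit
  have hKrylov : (of ![![0, 1, 0], M₄ *ᵥ ![0, 1, 0], M₄ ^ 2 *ᵥ ![0, 1, 0]]).det =
      4 * (a * b - 1) * (a ^ 3 - b ^ 3) := by
    rw [hM₄]
    simp only [Nat.succ_eq_add_one, Nat.reduceAdd, sq, mulVec_cons, zero_smul, one_smul,
      mulVec_empty, add_zero, zero_add, cons_mul, vecMul_cons, head_cons, smul_cons, smul_eq_mul,
      smul_empty, tail_cons, empty_vecMul, add_cons, empty_add_empty, empty_mul,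
      Equiv.symm_apply_apply, det_fin_three, Fin.isValue, of_apply, cons_val', cons_val_zero,
      Function.comp_apply, cons_val_fin_one, cons_val_one, zero_mul, cons_val, sub_self, one_mul,
      zero_sub, sub_zero]
    ring
  refine ⟨hrank, (rank_mul_eq_left_of_isUnit_det M₄ _ hdetM₄).trans hrank,
    (rank_mul_eq_left_of_isUnit_det _ _ (by rw [det_pow]; exact hdetM₄.pow 2)).trans hrank,
    rowSpace_inf_rowSpace_mul_inf_rowSpace_mul_sq_eq_bot (e := ![0, 1, 0]) ?_ hdetM₄ ?_⟩
  · ext i; fin_cases i <;> simp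
  · rw [hKrylov]
    exact mul_ne_zero (mul_ne_zero (by norm_num) hab1') (sub_ne_zero.2 hab3)
end

section
/- Let α, β, c, d ∈ ℂ with α ≠ 0, β ≠ 0, and α^k ≠ β^k for every positive integer k. Let T be an invertible 3×3 complex matrix, let D be the 3×3 matrix [[α, 0, 0],[0, β, 0],[0, c, d]], and set M = T⁻¹DT. Let s ∈ ℂ³ be a vector such that the first and second coordinates of Ts are both nonzero. Then for every positive integer k, M^k s is not a complex scalar multiple of s. -/
/-!
Conjugating by `T`, an eigenvector `s` of `M ^ k` gives an eigenvector `T s` of `D ^ k` with the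
same eigenvalue. The first two rows of `D` are `α e₀` and `β e₁`, so the same holds for the rows
of `D ^ k` with `α ^ k` and `β ^ k`. Reading off the first two coordinates of `D ^ k (T s)`, both
nonzero, forces the eigenvalue to equal both `α ^ k` and `β ^ k`.
-/

open Matrix

namespace Matrix

variable {n R : Type*} [Fintype n] [DecidableEq n] [Semiring R]

theorem pow_apply_eq_single_of_apply_eq_single {A : Matrix n n R} {i : n} {a : R}
    (h : A i = Pi.single i a) (k : ℕ) : (A ^ k) i = Pi.single i (a ^ k) := by
  induction k with
  | zero => ext j; simp [one_apply, Pi.single_apply, eq_comm]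
  | succ k ih =>
    ext j
    rw [pow_succ', mul_apply', h, single_dotProduct]
    simp [ih, Pi.single_apply, pow_succ']

theorem mulVec_apply_of_apply_eq_single {A : Matrix n n R} {i : n} {a : R}
    (h : A i = Pi.single i a) (v : n → R) : (A *ᵥ v) i = a * v i := by
  rw [mulVec, h, single_dotProduct]

theorem mulVec_pow_mulVec_of_mul_eq_mul {T M D : Matrix n n R} (h : T * M = D * T) (k : ℕ)
    (s : n → R) : T *ᵥ (M ^ k *ᵥ s) = D ^ k *ᵥ (T *ᵥ s) := by
  rw [mulVec_mulVec, mulVec_mulVec, (SemiconjBy.pow_right h k).eq]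

theorem eq_of_mulVec_eq_smul_of_apply_eq_single {K : Type*} [Field K] {A : Matrix n n K}
    {i : n} {a lam : K} (h : A i = Pi.single i a) {v : n → K} (hv : A *ᵥ v = lam • v)
    (hvi : v i ≠ 0) : a = lam := by
  have hi := congrFun hv i
  rw [mulVec_apply_of_apply_eq_single h, Pi.smul_apply, smul_eq_mul] at hi
  exact mul_right_cancel₀ hvi hi

end Matrix

theorem stmt_17_general (α β c d : ℂ)
    (hpow : ∀ k : ℕ, 1 ≤ k → α ^ k ≠ β ^ k)
    (T : Matrix (Fin 3) (Fin 3) ℂ) (hT : IsUnit T)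
    (D : Matrix (Fin 3) (Fin 3) ℂ) (hD : D = !![α, 0, 0; 0, β, 0; 0, c, d])
    (M : Matrix (Fin 3) (Fin 3) ℂ) (hM : M = T⁻¹ * D * T)
    (s : Fin 3 → ℂ) (hs0 : (T *ᵥ s) 0 ≠ 0) (hs1 : (T *ᵥ s) 1 ≠ 0) :
    ∀ k : ℕ, 1 ≤ k → ¬ ∃ lam : ℂ, (M ^ k) *ᵥ s = lam • s := by
  rintro k hk ⟨lam, hlam⟩
  have hTM : T * M = D * T := by
    rw [hM, ← Matrix.mul_assoc,
      mul_nonsing_inv_cancel_left _ _ ((isUnit_iff_isUnit_det T).mp hT)]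
  have hDk : D ^ k *ᵥ (T *ᵥ s) = lam • (T *ᵥ s) := by
    rw [← mulVec_pow_mulVec_of_mul_eq_mul hTM, hlam, mulVec_smul]
  have hD0 : D 0 = Pi.single 0 α := by subst hD; ext j; fin_cases j <;> rfl
  have hD1 : D 1 = Pi.single 1 β := by subst hD; ext j; fin_cases j <;> rfl
  have hα : α ^ k = lam := eq_of_mulVec_eq_smul_of_apply_eq_single
    (pow_apply_eq_single_of_apply_eq_single hD0 k) hDk hs0
  have hβ : β ^ k = lam := eq_of_mulVec_eq_smul_of_apply_eq_single
    (pow_apply_eq_single_of_apply_eq_single hD1 k) hDk hs1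
  exact hpow k hk (hα.trans hβ.symm)

theorem stmt_17 (α β c d : ℂ) (hα : α ≠ 0) (hβ : β ≠ 0)
    (hpow : ∀ k : ℕ, 1 ≤ k → α ^ k ≠ β ^ k)
    (T : Matrix (Fin 3) (Fin 3) ℂ) (hT : IsUnit T)
    (D : Matrix (Fin 3) (Fin 3) ℂ) (hD : D = !![α, 0, 0; 0, β, 0; 0, c, d])
    (M : Matrix (Fin 3) (Fin 3) ℂ) (hM : M = T⁻¹ * D * T)
    (s : Fin 3 → ℂ) (hs0 : (T *ᵥ s) 0 ≠ 0) (hs1 : (T *ᵥ s) 1 ≠ 0) :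
    ∀ k : ℕ, 1 ≤ k → ¬ ∃ lam : ℂ, (M ^ k) *ᵥ s = lam • s :=
  stmt_17_general α β c d hpow T hT D hD M hM s hs0 hs1
end

section
/- Let a, b ∈ ℂ with ab ≠ 1 and a³ ≠ b³. Let F = [[a, 0, 1],[1, 0, b]], M₄ = [[a³, 2a, b],[a², ab+1, b²],[a, 2b, b³]], M₆ = [[a³+1, 0, a²+b],[a²+b, 0, a+b²],[a+b², 0, b³+1]], and s = (a, 1, b)ᵀ ∈ ℂ³. Then the three vectors Fs, F·M₄·s, and F·M₆·s in ℂ² are pairwise linearly independent; equivalently, each of the 2×2 matrices [F·M₄·s | Fs], [F·M₆·s | Fs], and [F·M₄·s | F·M₆·s] is nonsingular. -/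
/-!
The three vectors are polynomial in `a, b`, and the `2 × 2` determinants of the three pairs factor
as `-(ab - 1)² (a³ - b³)`, `-(ab - 1)² (a³ - b³)` and `(ab - 1)³ (a³ - b³)`, so none vanishes.
-/

open Matrix

theorem linearIndependent_pair_iff {K : Type*} [Field K] (u v : Fin 2 → K) :
    LinearIndependent K ![u, v] ↔ u 0 * v 1 - u 1 * v 0 ≠ 0 := by
  have h := linearIndependent_rows_iff_isUnit (A := of ![u, v])
  rw [isUnit_iff_isUnit_det, isUnit_iff_ne_zero, det_fin_two] at h
  exact h

section

variable {R : Type*} [CommRing R] (a b : R)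

theorem F_mulVec_s : !![a, 0, 1; 1, 0, b] *ᵥ ![a, 1, b] = ![a ^ 2 + b, a + b ^ 2] := by
  simp only [cons_mulVec, empty_mulVec, vec3_dotProduct', vecCons_inj, and_true]
  constructor <;> ring

theorem F_mulVec_M₄_mulVec_s :
    !![a, 0, 1; 1, 0, b] *ᵥ
        (!![a ^ 3, 2 * a, b; a ^ 2, a * b + 1, b ^ 2; a, 2 * b, b ^ 3] *ᵥ ![a, 1, b]) =
      ![a ^ 5 + 3 * a ^ 2 + a * b ^ 2 + 2 * b + b ^ 4,
        a ^ 4 + 2 * a + a ^ 2 * b + 3 * b ^ 2 + b ^ 5] := by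
  simp only [cons_mulVec, empty_mulVec, vec3_dotProduct', vecCons_inj, and_true]
  constructor <;> ring

theorem F_mulVec_M₆_mulVec_s :
    !![a, 0, 1; 1, 0, b] *ᵥ
        (!![a ^ 3 + 1, 0, a ^ 2 + b; a ^ 2 + b, 0, a + b ^ 2; a + b ^ 2, 0, b ^ 3 + 1] *ᵥ
          ![a, 1, b]) =
      ![a ^ 5 + a ^ 3 * b + 2 * a ^ 2 + 2 * a * b ^ 2 + b ^ 4 + b,
        a ^ 4 + 2 * a ^ 2 * b + a * b ^ 3 + a + 2 * b ^ 2 + b ^ 5] := by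
  simp only [cons_mulVec, empty_mulVec, vec3_dotProduct', vecCons_inj, and_true]
  constructor <;> ring

end

theorem stmt_18 (a b : ℂ) (hab1 : a * b ≠ 1) (hab3 : a ^ 3 ≠ b ^ 3)
    (F : Matrix (Fin 2) (Fin 3) ℂ) (hF : F = !![a, 0, 1; 1, 0, b])
    (M₄ : Matrix (Fin 3) (Fin 3) ℂ)
    (hM₄ : M₄ = !![a ^ 3, 2 * a, b; a ^ 2, a * b + 1, b ^ 2; a, 2 * b, b ^ 3])
    (M₆ : Matrix (Fin 3) (Fin 3) ℂ)
    (hM₆ : M₆ = !![a ^ 3 + 1, 0, a ^ 2 + b;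
                   a ^ 2 + b, 0, a + b ^ 2;
                   a + b ^ 2, 0, b ^ 3 + 1])
    (s : Fin 3 → ℂ) (hs : s = ![a, 1, b]) :
    LinearIndependent ℂ ![F *ᵥ s, F *ᵥ (M₄ *ᵥ s)] ∧
    LinearIndependent ℂ ![F *ᵥ s, F *ᵥ (M₆ *ᵥ s)] ∧
    LinearIndependent ℂ ![F *ᵥ (M₄ *ᵥ s), F *ᵥ (M₆ *ᵥ s)] := by
  subst hF hM₄ hM₆ hs
  rw [F_mulVec_s, F_mulVec_M₄_mulVec_s, F_mulVec_M₆_mulVec_s]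
  simp only [linearIndependent_pair_iff, cons_val_zero, cons_val_one]
  have hab1_sub : a * b - 1 ≠ 0 := sub_ne_zero.mpr hab1
  have hab3_sub : a ^ 3 - b ^ 3 ≠ 0 := sub_ne_zero.mpr hab3
  refine ⟨?_, ?_, ?_⟩
  · convert (neg_ne_zero.mpr (mul_ne_zero (pow_ne_zero 2 hab1_sub) hab3_sub)) using 1; ring
  · convert (neg_ne_zero.mpr (mul_ne_zero (pow_ne_zero 2 hab1_sub) hab3_sub)) using 1; ring
  · convert mul_ne_zero (pow_ne_zero 3 hab1_sub) hab3_sub using 1; ring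
end
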